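/- arXiv:2306.05008 — 4 statements merged into one kernel-verified Lean document; each statement's English description precedes it below -/
import Mathlib

section
/- Let m ≥ 1 be a natural number and for j ∈ ℕ define c_j = (1/π) ∫₀^{2π} (cos η)^m cos(jη) dη. Then ∑_{j=1}^m j c_j² = (m / 4^{m-1}) · C(m-1, ⌊(m-1)/2⌋)², where C denotes the binomial coefficient. -/
open Real intervalIntegral

/-!
The product-to-sum formula `2 cos η cos (x η) = cos ((x + 1) η) + cos ((x - 1) η)` gives a
Pascal-type recursion in `m` for `∫₀^{2π} cos^m η cos (j η) dη`, whence `c_{m-2k} = 2^{1-m} C(m, k)`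
and `c_j = 0` for `j ≢ m (mod 2)`. The sum `∑ (m - 2k) C(m, k)²` then telescopes, because
`(m - 2k) C(m, k)² = m (C(m-1, k)² - C(m-1, k-1)²)`.
-/

noncomputable def cosPowCosIntegral (m j : ℕ) : ℝ :=
  if j ≤ m ∧ j % 2 = m % 2 then 2 * π / 2 ^ m * m.choose ((m - j) / 2) else 0

lemma cosPowCosIntegral_zero (j : ℕ) :
    cosPowCosIntegral 0 j = if j = 0 then 2 * π else 0 := by
  rcases j.eq_zero_or_pos with rfl | hj
  · simp [cosPowCosIntegral]
  · simp [cosPowCosIntegral, hj.ne', hj.not_ge]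

lemma cosPowCosIntegral_succ_zero (m : ℕ) :
    cosPowCosIntegral (m + 1) 0 = cosPowCosIntegral m 1 := by
  unfold cosPowCosIntegral
  rcases m.even_or_odd' with ⟨t, rfl | rfl⟩
  · rw [if_neg (by omega), if_neg (by omega)]
  · rw [if_pos (by omega), if_pos (by omega), show (2 * t + 1 + 1 - 0) / 2 = t + 1 by omega,
      show (2 * t + 1 - 1) / 2 = t by omega, Nat.choose_succ_succ, Nat.choose_symm_half]
    push_cast
    ring

lemma cosPowCosIntegral_succ_succ (m j : ℕ) :
    cosPowCosIntegral (m + 1) (j + 1) =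
      (cosPowCosIntegral m (j + 2) + cosPowCosIntegral m j) / 2 := by
  unfold cosPowCosIntegral
  by_cases hj : j ≤ m ∧ j % 2 = m % 2
  · rw [if_pos (by omega), if_pos hj]
    obtain ⟨d, hd⟩ : ∃ d, m = j + 2 * d := ⟨(m - j) / 2, by omega⟩
    subst hd
    rcases d with _ | d
    · rw [if_neg (by omega), show (j + 2 * 0 + 1 - (j + 1)) / 2 = 0 by omega,
        show (j + 2 * 0 - j) / 2 = 0 by omega, Nat.choose_zero_right, Nat.choose_zero_right]
      push_cast
      ring
    · rw [if_pos (by omega), show (j + 2 * (d + 1) + 1 - (j + 1)) / 2 = d + 1 by omega,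
        show (j + 2 * (d + 1) - (j + 2)) / 2 = d by omega,
        show (j + 2 * (d + 1) - j) / 2 = d + 1 by omega, Nat.choose_succ_succ]
      push_cast
      ring
  · rw [if_neg (by omega), if_neg (by omega), if_neg hj]
    norm_num

lemma integral_cos_nat_mul (j : ℕ) :
    ∫ η in (0 : ℝ)..2 * π, cos (j * η) = if j = 0 then 2 * π else 0 := by
  rcases j.eq_zero_or_pos with rfl | hj
  · simp
  · have hj' : (j : ℝ) ≠ 0 := by positivity
    rw [if_neg hj.ne', integral_comp_mul_left (fun x => cos x) hj', integral_cos,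
      mul_zero, sin_zero, show (j : ℝ) * (2 * π) = (2 * j : ℕ) * π by push_cast; ring,
      sin_nat_mul_pi, sub_zero, smul_zero]

lemma cos_pow_succ_mul_cos (m : ℕ) (x η : ℝ) :
    cos η ^ (m + 1) * cos (x * η) =
      (cos η ^ m * cos ((x + 1) * η) + cos η ^ m * cos ((x - 1) * η)) / 2 := by
  rw [← mul_add, cos_add_cos]
  ring_nf

lemma intervalIntegrable_cos_pow_mul_cos (m : ℕ) (x a b : ℝ) :
    IntervalIntegrable (fun η => cos η ^ m * cos (x * η)) MeasureTheory.volume a b :=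
  (by fun_prop : Continuous fun η => cos η ^ m * cos (x * η)).intervalIntegrable a b

theorem integral_cos_pow_mul_cos (m j : ℕ) :
    ∫ η in (0 : ℝ)..2 * π, cos η ^ m * cos (j * η) = cosPowCosIntegral m j := by
  induction m generalizing j with
  | zero => simpa [cosPowCosIntegral_zero] using integral_cos_nat_mul j
  | succ m ih =>
    simp_rw [cos_pow_succ_mul_cos m]
    rw [integral_div, integral_add (intervalIntegrable_cos_pow_mul_cos ..)
      (intervalIntegrable_cos_pow_mul_cos ..)]
    rcases j with _ | j
    · simp only [Nat.cast_zero, zero_add, zero_sub, neg_mul, cos_neg, ← Nat.cast_one (R := ℝ), ih,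
        cosPowCosIntegral_succ_zero]
      ring
    · have h₁ : ((j + 1 : ℕ) : ℝ) + 1 = (j + 2 : ℕ) := by push_cast; ring
      have h₂ : ((j + 1 : ℕ) : ℝ) - 1 = j := by push_cast; ring
      rw [h₁, h₂, ih, ih, cosPowCosIntegral_succ_succ]

lemma cosPowCosIntegral_sub_two_mul {m k : ℕ} (hk : 2 * k ≤ m) :
    cosPowCosIntegral m (m - 2 * k) = 2 * π / 2 ^ m * m.choose k := by
  rw [cosPowCosIntegral, if_pos (by omega), show (m - (m - 2 * k)) / 2 = k by omega]

lemma cosPowCosIntegral_of_mod_ne {m j : ℕ} (hj : j % 2 ≠ m % 2) :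
    cosPowCosIntegral m j = 0 :=
  if_neg fun h => hj h.2

lemma add_one_mul_choose_succ_eq_mul_sub (n k : ℕ) :
    ((n : ℝ) + 1) * n.choose (k + 1) = (n + 1).choose (k + 1) * ((n : ℝ) - k) := by
  rcases le_or_gt k n with hk | hk
  · have := Nat.choose_mul_succ_eq n (k + 1)
    rw [show n + 1 - (k + 1) = n - k by omega] at this
    exact_mod_cast (by rw [mul_comm]; exact_mod_cast this : _)
  · simp [Nat.choose_eq_zero_of_lt (by omega : n < k + 1),
      Nat.choose_eq_zero_of_lt (by omega : n + 1 < k + 1)]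

lemma sum_range_sub_two_mul_mul_choose_sq (n K : ℕ) :
    ∑ k ∈ Finset.range (K + 1), ((n + 1 : ℝ) - 2 * k) * ((n + 1).choose k : ℝ) ^ 2
      = (n + 1) * (n.choose K : ℝ) ^ 2 := by
  induction K with
  | zero => simp
  | succ K ih =>
    rw [Finset.sum_range_succ, ih]
    have hlo := congrArg (Nat.cast (R := ℝ)) (Nat.add_one_mul_choose_eq n K)
    have hhi := add_one_mul_choose_succ_eq_mul_sub n K
    push_cast at hlo hhi ⊢
    have hn : (n + 1 : ℝ) ≠ 0 := by positivity
    refine mul_left_cancel₀ hn ?_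
    linear_combination ((n + 1) * (n.choose K : ℝ) + (n + 1).choose (K + 1) * (K + 1)) * hlo
      - ((n + 1) * (n.choose (K + 1) : ℝ) + (n + 1).choose (K + 1) * (n - K)) * hhi

lemma sum_Icc_eq_sum_range_sub_two_mul {M : Type*} [AddCommMonoid M] (m : ℕ) (f : ℕ → M)
    (hf : ∀ j, j % 2 ≠ m % 2 → f j = 0) :
    ∑ j ∈ Finset.Icc 1 m, f j = ∑ k ∈ Finset.range ((m + 1) / 2), f (m - 2 * k) := by
  have hinj : Set.InjOn (fun k => m - 2 * k) (Finset.range ((m + 1) / 2)) := by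
    intro a ha b hb hab
    simp only [Finset.coe_range, Set.mem_Iio] at ha hb hab
    omega
  rw [← Finset.sum_image hinj]
  refine (Finset.sum_subset (fun j hj => ?_) fun j hj hj' => hf j fun hpar => hj' ?_).symm
  · simp only [Finset.mem_image, Finset.mem_range, Finset.mem_Icc] at hj ⊢
    omega
  · rw [Finset.mem_Icc] at hj
    exact Finset.mem_image.2 ⟨(m - j) / 2, Finset.mem_range.2 (by omega), by omega⟩

/-- For `m ≥ 1` and `c j = (1/π) ∫₀^{2π} (cos η)^m cos (j η) dη`, one has
`∑_{j=1}^m j c_j² = (m / 4^{m-1}) · C(m-1, ⌊(m-1)/2⌋)²`. -/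
theorem sum_j_cj_sq (m : ℕ) (hm : 1 ≤ m) (c : ℕ → ℝ)
    (hc : ∀ j : ℕ, c j =
      (1 / π) * ∫ η in (0:ℝ)..(2 * π), (Real.cos η) ^ m * Real.cos (j * η)) :
    ∑ j ∈ Finset.Icc 1 m, (j : ℝ) * (c j) ^ 2
      = ((m : ℝ) / 4 ^ (m - 1)) * ((Nat.choose (m - 1) ((m - 1) / 2) : ℝ)) ^ 2 := by
  have hc_eq (j : ℕ) : c j = cosPowCosIntegral m j / π := by
    rw [hc, integral_cos_pow_mul_cos]
    ring
  obtain ⟨n, rfl⟩ : ∃ n, m = n + 1 := ⟨m - 1, by omega⟩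
  rw [sum_Icc_eq_sum_range_sub_two_mul _ _ fun j hj => by
      rw [hc_eq, cosPowCosIntegral_of_mod_ne hj, zero_div, zero_pow two_ne_zero, mul_zero],
    show (n + 1 + 1) / 2 = n / 2 + 1 by omega, Nat.add_sub_cancel]
  calc _ = ∑ k ∈ Finset.range (n / 2 + 1),
        ((n + 1 : ℝ) - 2 * k) * ((n + 1).choose k : ℝ) ^ 2 / 4 ^ n :=
        Finset.sum_congr rfl fun k hk => by
          have hk : 2 * k ≤ n + 1 := by rw [Finset.mem_range] at hk; omega
          rw [hc_eq, cosPowCosIntegral_sub_two_mul hk, Nat.cast_sub hk,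
            show (4 : ℝ) ^ n = (2 ^ n) ^ 2 by rw [sq, ← mul_pow]; norm_num]
          field_simp
          push_cast
          ring
    _ = _ := by
      rw [← Finset.sum_div, sum_range_sub_two_mul_mul_choose_sq]
      push_cast
      ring
end

section
/- Let T_m be a homogeneous polynomial of degree m with T_m(cos t, sin t) = β sin(m(t - α₀)) for all t, where β ≠ 0 and α₀ ∈ [0, 2π). If α₀ = jπ/m for some integer j, then ∂T_m/∂x₁^m(0) = 0 (i.e. the coefficient of x₁^m vanishes) and β = (-1)^j (1/m!) ∂^m T_m / (∂x₁^{m-1} ∂x₂)(0). -/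
/-!
Restricted to the unit circle, the form `T(x₁, x₂) = ∑ ℓᵢ x₁^{m-i} x₂^i` equals `ℓ₀` at `t = 0`
and has derivative `ℓ₁` there, since every other monomial vanishes to order at least two at
`(cos 0, sin 0) = (1, 0)`. Comparing with `β sin(m(t - α₀))`, whose value and derivative at `0`
are `-β sin(m α₀) = 0` and `β m cos(m α₀) = (-1)^j β m` when `m α₀ = jπ`, gives `ℓ₀ = 0` and
`ℓ₁ = (-1)^j m β`, which is the claim since `m! = m (m-1)!`.
-/

open Real Finset

theorem hasDerivAt_cos_pow_mul_sin_pow_zero (a b : ℕ) :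
    HasDerivAt (fun t => cos t ^ a * sin t ^ b) (if b = 1 then 1 else 0) 0 := by
  have h := ((hasDerivAt_cos 0).fun_pow a).fun_mul ((hasDerivAt_sin 0).fun_pow b)
  rcases b with _ | _ | b <;> simpa using h

theorem sum_cos_pow_mul_sin_pow_zero (m : ℕ) (ℓ : ℕ → ℝ) :
    ∑ i ∈ range (m + 1), ℓ i * cos 0 ^ (m - i) * sin 0 ^ i = ℓ 0 := by
  rw [sum_eq_single_of_mem 0 (mem_range.2 m.succ_pos) fun i _ hi => by simp [zero_pow hi]]
  simp

theorem hasDerivAt_sum_cos_pow_mul_sin_pow_zero {m : ℕ} (hm : 1 ≤ m) (ℓ : ℕ → ℝ) :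
    HasDerivAt (fun t => ∑ i ∈ range (m + 1), ℓ i * cos t ^ (m - i) * sin t ^ i) (ℓ 1) 0 := by
  have hsum := HasDerivAt.fun_sum (u := range (m + 1)) fun i _ =>
    (hasDerivAt_cos_pow_mul_sin_pow_zero (m - i) i).const_mul (ℓ i)
  simpa only [mul_assoc, mul_ite, mul_one, mul_zero, sum_ite_eq', mem_range,
    Nat.lt_succ_of_le hm, if_true] using hsum

theorem hasDerivAt_const_mul_sin_mul_sub_zero (β c α : ℝ) :
    HasDerivAt (fun t => β * sin (c * (t - α))) (β * c * cos (c * α)) 0 := by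
  refine ((((hasDerivAt_id (0 : ℝ)).sub_const α).const_mul c).sin.const_mul β).congr_deriv ?_
  simp only [id, zero_sub, mul_neg, cos_neg, mul_one]
  ring

theorem homogeneous_poly_nodal_case_general (m : ℕ) (hm : 1 ≤ m) (β α₀ : ℝ)
    (ℓ : ℕ → ℝ)
    (hT : ∀ t : ℝ,
      ∑ i ∈ Finset.range (m + 1), ℓ i * (Real.cos t) ^ (m - i) * (Real.sin t) ^ i
        = β * Real.sin (m * (t - α₀)))
    (j : ℤ) (hj : α₀ = j * π / m) :
    ℓ 0 = 0 ∧
      β = (-1 : ℝ) ^ j * ((Nat.factorial (m - 1) : ℝ) * ℓ 1) / (Nat.factorial m : ℝ) := by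
  have hnodal : (m : ℝ) * α₀ = j * π := by
    rw [hj]
    field_simp
  have hℓ0 : ℓ 0 = 0 := by
    rw [← sum_cos_pow_mul_sin_pow_zero m ℓ, hT, zero_sub, mul_neg, sin_neg, hnodal,
      sin_int_mul_pi]
    ring
  have hℓ1 : ℓ 1 = β * m * (-1) ^ j := by
    have hderiv := hasDerivAt_sum_cos_pow_mul_sin_pow_zero hm ℓ
    simp only [hT] at hderiv
    rw [hderiv.unique (hasDerivAt_const_mul_sin_mul_sub_zero β m α₀), hnodal, cos_int_mul_pi]
  have hsign : ((-1 : ℝ) ^ j) * (-1) ^ j = 1 := by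
    rw [← mul_zpow]
    norm_num
  refine ⟨hℓ0, ?_⟩
  rw [hℓ1, ← Nat.mul_factorial_pred (by omega : m ≠ 0), Nat.cast_mul,
    eq_div_iff (by positivity)]
  linear_combination (-(β * m * (m - 1).factorial)) * hsign

/-- Let `T_m(x₁,x₂) = ∑_{i=0}^m ℓ_i x₁^{m-i} x₂^i` be a homogeneous polynomial of degree
`m ≥ 1` with `T_m(cos t, sin t) = β sin(m(t - α₀))` for all `t`, where `β ≠ 0` and
`α₀ ∈ [0, 2π)`. If `α₀ = jπ/m` for some integer `j`, then the coefficient of `x₁^m`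
vanishes (i.e. `∂^m T_m/∂x₁^m (0) = m! ℓ₀ = 0`) and
`β = (-1)^j (1/m!) ∂^m T_m/(∂x₁^{m-1}∂x₂)(0) = (-1)^j (m-1)! ℓ₁ / m!`. -/
theorem homogeneous_poly_nodal_case (m : ℕ) (hm : 1 ≤ m) (β α₀ : ℝ) (hβ : β ≠ 0)
    (hα₀ : α₀ ∈ Set.Ico (0:ℝ) (2 * π)) (ℓ : ℕ → ℝ)
    (hT : ∀ t : ℝ,
      ∑ i ∈ Finset.range (m + 1), ℓ i * (Real.cos t) ^ (m - i) * (Real.sin t) ^ i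
        = β * Real.sin (m * (t - α₀)))
    (j : ℤ) (hj : α₀ = j * π / m) :
    ℓ 0 = 0 ∧
      β = (-1 : ℝ) ^ j * ((Nat.factorial (m - 1) : ℝ) * ℓ 1) / (Nat.factorial m : ℝ) :=
  homogeneous_poly_nodal_case_general m hm β α₀ ℓ hT j hj
end

section
/- Let k₁ be an odd natural number and let D₂ \ D₁ ⊂ ℝ² be the annulus with radii 1 and 2 centered at the origin, cut by k₁ distinct half-lines Γ₀^j = {t a^j : t ≤ 0} through the origin with distinct directions. If w ∈ H¹((D₂ \ D₁) \ ⋃_j Γ₀^j) is locally constant (i.e., ∇w = 0 on each connected component) and the sum of the two one-sided traces of w across each half-line Γ₀^j vanishes for every j = 1, …, k₁, then w ≡ 0. -/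
/-!
Pushing a point of the cut annulus radially onto the circle of radius `3/2` never crosses a
cut, so `w` is determined by `F θ = w (3/2 cos θ, 3/2 sin θ)`. This function is locally
constant off the set `A` of angles of the cuts, a `2π`-periodic set with exactly `k₁` points
per period (the directions are distinct). Approaching the cut at angle `α` from the side
`0 < a₁ x₂ - a₂ x₁` means `θ ↑ α`, so the trace condition says that `F` changes sign across
every point of `A`. Going once around the circle, `F θ = (-1) ^ k₁ F θ = -F θ`.
-/

open Real Filter Topology Set

theorem IsLocallyConstant.apply_eq_of_isPreconnected_of_subset {X Y : Type*}
    [TopologicalSpace X] {s t : Set X} {f : X → Y} (hf : IsLocallyConstant (fun x : s => f x))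
    (ht : IsPreconnected t) (hts : t ⊆ s) {x y : X} (hx : x ∈ t) (hy : y ∈ t) : f x = f y := by
  have ht' : IsPreconnected ((↑) ⁻¹' t : Set s) := by
    rwa [← Topology.IsInducing.subtypeVal.isPreconnected_image, Subtype.image_preimage_coe,
      inter_eq_right.2 hts]
  exact hf.apply_eq_of_isPreconnected ht' (x := ⟨x, hts hx⟩) (y := ⟨y, hts hy⟩) hx hy

section SignChange

variable {A : Set ℝ} {F : ℝ → ℝ}

theorem eventually_nhdsNE_notMem_of_finite (hA : ∀ a b, (A ∩ Ioo a b).Finite) (α : ℝ) :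
    ∀ᶠ θ in 𝓝[≠] α, θ ∉ A := by
  have hfar : ((A ∩ Ioo (α - 1) (α + 1)) \ {α})ᶜ ∈ 𝓝 α :=
    (hA _ _).sdiff.isClosed.isOpen_compl.mem_nhds (by simp)
  filter_upwards [nhdsWithin_le_nhds hfar, nhdsWithin_le_nhds (Ioo_mem_nhds (by linarith)
    (by linarith) : Ioo (α - 1) (α + 1) ∈ 𝓝 α), self_mem_nhdsWithin] with θ hfar hnear hne hθ
  exact hfar ⟨⟨hθ, hnear⟩, hne⟩

theorem apply_eq_neg_of_jump (hF : IsLocallyConstant (fun θ : (Aᶜ : Set ℝ) => F θ))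
    {α cl cr θ₁ θ₂ : ℝ}
    (hl : Tendsto F (𝓝[<] α) (𝓝 cl)) (hr : Tendsto F (𝓝[>] α) (𝓝 cr)) (hsum : cl + cr = 0)
    (h₁ : θ₁ < α) (h₂ : α < θ₂) (hA : A ∩ Icc θ₁ θ₂ ⊆ {α}) : F θ₂ = -F θ₁ := by
  have hconst : ∀ x y, x ≤ y → Icc x y ⊆ Icc θ₁ θ₂ \ {α} → F x = F y := fun x y hxy hsub =>
    hF.apply_eq_of_isPreconnected_of_subset isPreconnected_Icc
      (fun z hz hzA => (hsub hz).2 (hA ⟨hzA, (hsub hz).1⟩)) (left_mem_Icc.2 hxy)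
      (right_mem_Icc.2 hxy)
  have hcl : cl = F θ₁ := by
    refine tendsto_nhds_unique_of_eventuallyEq hl tendsto_const_nhds ?_
    filter_upwards [Ioo_mem_nhdsLT h₁] with θ hθ
    refine (hconst θ₁ θ hθ.1.le fun z hz => ⟨⟨hz.1, ?_⟩, ?_⟩).symm
    · linarith [hz.2, hθ.2]
    · exact ne_of_lt (hz.2.trans_lt hθ.2)
  have hcr : cr = F θ₂ := by
    refine tendsto_nhds_unique_of_eventuallyEq hr tendsto_const_nhds ?_
    filter_upwards [Ioo_mem_nhdsGT h₂] with θ hθ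
    refine hconst θ θ₂ hθ.2.le fun z hz => ⟨⟨?_, hz.2⟩, ?_⟩
    · linarith [hz.1, hθ.1]
    · exact ne_of_gt (hθ.1.trans_le hz.1)
  linarith

theorem exists_split_of_inter_Ioo_eq_insert {s : Finset ℝ} {α θ₁ θ₂ : ℝ}
    (hlt : ∀ x ∈ s, x < α) (h₂ : θ₂ ∉ A) (hs : A ∩ Ioo θ₁ θ₂ = ↑(insert α s)) :
    ∃ θ ∈ Ioo θ₁ α, θ ∉ A ∧ A ∩ Ioo θ₁ θ = ↑s ∧ A ∩ Icc θ θ₂ ⊆ {α} := by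
  have hmem : ∀ x, x ∈ A ∩ Ioo θ₁ θ₂ ↔ x = α ∨ x ∈ s := fun x => by simp [hs]
  have hα := (hmem α).2 (Or.inl rfl)
  obtain ⟨θ, ⟨hθ₁, hθα⟩, hsθ⟩ : ∃ θ, θ ∈ Ioo θ₁ α ∧ ∀ x ∈ s, x < θ :=
    (Eventually.and (Ioo_mem_nhdsLT hα.2.1) ((eventually_all_finset s).2 fun x hx =>
      mem_of_superset (Ioo_mem_nhdsLT (hlt x hx)) fun _ h => h.1)).exists
  have hθA : θ ∉ A := fun hθA => by
    rcases (hmem θ).1 ⟨hθA, hθ₁, hθα.trans hα.2.2⟩ with rfl | hθs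
    · exact hθα.false
    · exact (hsθ θ hθs).false
  refine ⟨θ, ⟨hθ₁, hθα⟩, hθA, ?_, ?_⟩
  · ext x
    refine ⟨fun ⟨hxA, hx₁, hx⟩ => ?_, fun hx => ?_⟩
    · rcases (hmem x).1 ⟨hxA, hx₁, hx.trans (hθα.trans hα.2.2)⟩ with rfl | hxs
      · exact absurd (hx.trans hθα) (lt_irrefl _)
      · exact hxs
    · obtain ⟨hxA, hx₁, -⟩ := (hmem x).2 (Or.inr hx)
      exact ⟨hxA, hx₁, hsθ x hx⟩
  · rintro x ⟨hxA, hx, hx₂⟩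
    have hxθ : θ < x := hx.lt_of_ne fun h => hθA (h ▸ hxA)
    have hxθ₂ : x < θ₂ := hx₂.lt_of_ne fun h => h₂ (h ▸ hxA)
    rcases (hmem x).1 ⟨hxA, hθ₁.trans hxθ, hxθ₂⟩ with rfl | hxs
    · rfl
    · exact absurd (hsθ x hxs) (not_lt.2 hxθ.le)

theorem apply_eq_neg_one_pow_ncard_mul (hA : ∀ a b, (A ∩ Ioo a b).Finite)
    (hF : IsLocallyConstant (fun θ : (Aᶜ : Set ℝ) => F θ))
    (hjump : ∀ α ∈ A, ∃ cl cr, Tendsto F (𝓝[<] α) (𝓝 cl) ∧ Tendsto F (𝓝[>] α) (𝓝 cr) ∧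
      cl + cr = 0)
    {θ₁ θ₂ : ℝ} (h : θ₁ < θ₂) (h₁ : θ₁ ∉ A) (h₂ : θ₂ ∉ A) :
    F θ₂ = (-1) ^ (A ∩ Ioo θ₁ θ₂).ncard * F θ₁ := by
  suffices key : ∀ s : Finset ℝ, ∀ θ₂, θ₁ < θ₂ → θ₂ ∉ A → A ∩ Ioo θ₁ θ₂ = ↑s →
      F θ₂ = (-1) ^ s.card * F θ₁ by
    rw [ncard_eq_toFinset_card _ (hA θ₁ θ₂)]
    exact key _ θ₂ h h₂ (hA θ₁ θ₂).coe_toFinset.symm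
  intro s
  induction s using Finset.induction_on_max with
  | empty =>
    intro θ₂ h h₂ hs
    rw [Finset.card_empty, pow_zero, one_mul]
    refine (hF.apply_eq_of_isPreconnected_of_subset isPreconnected_Icc ?_
      (left_mem_Icc.2 h.le) (right_mem_Icc.2 h.le)).symm
    intro x hx hxA
    rcases hx.1.eq_or_lt with rfl | hx₁
    · exact h₁ hxA
    rcases hx.2.eq_or_lt with rfl | hx₂
    · exact h₂ hxA
    have hx : x ∈ A ∩ Ioo θ₁ θ₂ := ⟨hxA, hx₁, hx₂⟩
    simp [hs] at hx
  | insert α s hlt ih =>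
    intro θ₂ h h₂ hs
    have hα : α ∈ A ∩ Ioo θ₁ θ₂ := by simp [hs]
    obtain ⟨θ, ⟨hθ₁, hθα⟩, hθA, hleft, hright⟩ := exists_split_of_inter_Ioo_eq_insert hlt h₂ hs
    obtain ⟨cl, cr, hl, hr, hsum⟩ := hjump α hα.1
    rw [apply_eq_neg_of_jump hF hl hr hsum hθα hα.2.2 hright, ih θ hθ₁ hθA hleft,
      Finset.card_insert_of_notMem fun hαs => (hlt α hαs).false, pow_succ]
    ring

end SignChange

namespace AddCircle

variable {T : ℝ} [Fact (0 < T)] {S : Set (AddCircle T)}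

theorem finite_preimage_inter_Ico (hS : S.Finite) (a : ℝ) :
    ((↑) ⁻¹' S ∩ Ico a (a + T)).Finite :=
  Finite.of_finite_image (hS.subset (image_subset_iff.2 fun _ hx => hx.1))
    fun _ hx _ hy => (coe_eq_coe_iff_of_mem_Ico hx.2 hy.2).1

theorem finite_preimage_inter_Ioo (hS : S.Finite) (a b : ℝ) :
    ((↑) ⁻¹' S ∩ Ioo a b).Finite := by
  have hIco : ∀ n : ℕ, ((↑) ⁻¹' S ∩ Ico a (a + n • T)).Finite := by
    intro n
    induction n with
    | zero => simp
    | succ n ih =>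
      refine (ih.union (finite_preimage_inter_Ico hS (a + n • T))).subset ?_
      rintro x ⟨hxS, hx₁, hx₂⟩
      rcases lt_or_ge x (a + n • T) with hx | hx
      · exact Or.inl ⟨hxS, hx₁, hx⟩
      · exact Or.inr ⟨hxS, hx, by rwa [succ_nsmul, ← add_assoc] at hx₂⟩
  obtain ⟨n, hn⟩ := exists_lt_nsmul (Fact.out : 0 < T) (b - a)
  exact (hIco n).subset fun x ⟨hxS, hx₁, hx₂⟩ => ⟨hxS, hx₁.le, by linarith⟩

theorem ncard_preimage_inter_Ioo {θ : ℝ} (hθ : (θ : AddCircle T) ∉ S) :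
    ((↑) ⁻¹' S ∩ Ioo θ (θ + T)).ncard = S.ncard := by
  have hIoo : (↑) ⁻¹' S ∩ Ioo θ (θ + T) = (↑) ⁻¹' S ∩ Ico θ (θ + T) := by
    rw [← Ioo_insert_left (by linarith [(Fact.out : 0 < T)]),
      inter_insert_of_notMem (show θ ∉ (↑) ⁻¹' S from hθ)]
  rw [hIoo, ← InjOn.ncard_image fun _ hx _ hy => (coe_eq_coe_iff_of_mem_Ico hx.2 hy.2).1,
    inter_comm, image_inter_preimage, coe_image_Ico_eq, univ_inter]

end AddCircle

theorem polarCoord_symm_ne_zero {r : ℝ} (hr : r ≠ 0) (θ : ℝ) : polarCoord.symm (r, θ) ≠ 0 := by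
  intro h
  simp only [polarCoord_symm_apply, Prod.ext_iff, Prod.fst_zero, Prod.snd_zero, mul_eq_zero,
    hr, false_or] at h
  simpa [h.1, h.2] using cos_sq_add_sin_sq θ

theorem polarCoord_symm_add_two_pi (r θ : ℝ) :
    polarCoord.symm (r, θ + 2 * π) = polarCoord.symm (r, θ) := by
  simp only [polarCoord_symm_apply, cos_add_two_pi, sin_add_two_pi]

theorem exists_smul_eq_polarCoord_symm {x : ℝ × ℝ} (hx : x ≠ 0) {r : ℝ} (hr : 0 < r) :
    ∃ c : ℝ, 0 < c ∧ ∃ θ, c • x = polarCoord.symm (r, θ) := by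
  set z := Complex.equivRealProd.symm x
  have hz : 0 < ‖z‖ :=
    norm_pos_iff.2 fun h => hx (by simpa [z, Complex.ext_iff, Prod.ext_iff] using h)
  have hre : x.1 = ‖z‖ * cos (Complex.arg z) := by simp [z]
  have him : x.2 = ‖z‖ * sin (Complex.arg z) := by simp [z]
  refine ⟨r / ‖z‖, div_pos hr hz, Complex.arg z, ?_⟩
  simp only [polarCoord_symm_apply, Prod.ext_iff, Prod.smul_fst, Prod.smul_snd, smul_eq_mul]
  rw [hre, him]
  constructor <;> field_simp

def negHalfLine (v : ℝ × ℝ) : Set (ℝ × ℝ) := {x | ∃ t : ℝ, t ≤ 0 ∧ x = t • v}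

theorem smul_mem_negHalfLine_iff {v x : ℝ × ℝ} {c : ℝ} (hc : 0 < c) :
    c • x ∈ negHalfLine v ↔ x ∈ negHalfLine v := by
  constructor
  · rintro ⟨t, ht, h⟩
    refine ⟨c⁻¹ * t, mul_nonpos_of_nonneg_of_nonpos (inv_nonneg.2 hc.le) ht, ?_⟩
    rw [mul_smul, ← h, inv_smul_smul₀ hc.ne']
  · rintro ⟨t, ht, rfl⟩
    exact ⟨c * t, mul_nonpos_of_nonneg_of_nonpos hc.le ht, (mul_smul c t v).symm⟩

theorem polarCoord_symm_mem_negHalfLine_iff {v : ℝ × ℝ} {r θ : ℝ} (hv : v ≠ 0) (hr : 0 < r) :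
    polarCoord.symm (r, θ) ∈ negHalfLine v ↔
      (θ : Angle) = Complex.arg (-Complex.equivRealProd.symm v) := by
  set z := Complex.equivRealProd.symm v
  constructor
  · rintro ⟨t, ht, h⟩
    have ht0 : t ≠ 0 := by
      rintro rfl
      exact polarCoord_symm_ne_zero hr.ne' θ (by simpa using h)
    simp only [polarCoord_symm_apply, Prod.ext_iff, Prod.smul_fst, Prod.smul_snd,
      smul_eq_mul] at h
    have htz : (r : ℂ) * (cos θ + sin θ * Complex.I) = t * z := by
      apply Complex.ext <;> simp [z, Complex.cos_ofReal_re, Complex.sin_ofReal_re, h.1, h.2]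
    have hz : -z = ((r / -t : ℝ) : ℂ) * (Angle.cos θ + Angle.sin θ * Complex.I) := by
      have ht' : (t : ℂ) ≠ 0 := by exact_mod_cast ht0
      rw [Angle.cos_coe, Angle.sin_coe]
      push_cast at htz ⊢
      field_simp
      linear_combination htz
    rw [hz, Complex.arg_mul_cos_add_sin_mul_I_coe_angle (div_pos hr (neg_pos.2 (ht.lt_of_ne ht0)))]
  · intro hθ
    have hz : 0 < ‖z‖ :=
      norm_pos_iff.2 fun h => hv (by simpa [z, Complex.ext_iff, Prod.ext_iff] using h)
    have hcos : cos θ = cos (Complex.arg (-z)) := by simpa using congrArg Angle.cos hθ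
    have hsin : sin θ = sin (Complex.arg (-z)) := by simpa using congrArg Angle.sin hθ
    have hre : v.1 = -(‖z‖ * cos θ) := by
      rw [hcos, ← norm_neg, Complex.norm_mul_cos_arg]
      simp [z]
    have him : v.2 = -(‖z‖ * sin θ) := by
      rw [hsin, ← norm_neg, Complex.norm_mul_sin_arg]
      simp [z]
    refine ⟨-(r / ‖z‖), neg_nonpos.2 (div_pos hr hz).le, ?_⟩
    simp only [polarCoord_symm_apply, Prod.ext_iff, Prod.smul_fst, Prod.smul_snd, smul_eq_mul]
    rw [hre, him]
    constructor <;> field_simp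

theorem cross_polarCoord_symm {v : ℝ × ℝ} {r t α : ℝ} (ht : t ≠ 0)
    (h : polarCoord.symm (r, α) = t • v) (θ : ℝ) :
    v.1 * (polarCoord.symm (r, θ)).2 - v.2 * (polarCoord.symm (r, θ)).1
      = r ^ 2 / t * sin (θ - α) := by
  simp only [polarCoord_symm_apply, Prod.ext_iff, Prod.smul_fst, Prod.smul_snd,
    smul_eq_mul] at h ⊢
  rw [sin_sub, div_mul_eq_mul_div, eq_div_iff ht]
  linear_combination (r * cos θ) * h.2 - (r * sin θ) * h.1

theorem eventually_nhdsLT_cross_pos {v : ℝ × ℝ} {r t α : ℝ} (hr : r ≠ 0) (ht : t < 0)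
    (h : polarCoord.symm (r, α) = t • v) :
    ∀ᶠ θ in 𝓝[<] α, 0 < v.1 * (polarCoord.symm (r, θ)).2 - v.2 * (polarCoord.symm (r, θ)).1 := by
  filter_upwards [Ioo_mem_nhdsLT (by linarith [pi_pos] : α - π < α)] with θ hθ
  rw [cross_polarCoord_symm ht.ne h]
  exact mul_pos_of_neg_of_neg (div_neg_of_pos_of_neg (by positivity) ht)
    (sin_neg_of_neg_of_neg_pi_lt (by linarith [hθ.2]) (by linarith [hθ.1]))

theorem eventually_nhdsGT_cross_neg {v : ℝ × ℝ} {r t α : ℝ} (hr : r ≠ 0) (ht : t < 0)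
    (h : polarCoord.symm (r, α) = t • v) :
    ∀ᶠ θ in 𝓝[>] α, v.1 * (polarCoord.symm (r, θ)).2 - v.2 * (polarCoord.symm (r, θ)).1 < 0 := by
  filter_upwards [Ioo_mem_nhdsGT (by linarith [pi_pos] : α < α + π)] with θ hθ
  rw [cross_polarCoord_symm ht.ne h]
  exact mul_neg_of_neg_of_pos (div_neg_of_pos_of_neg (by positivity) ht)
    (sin_pos_of_pos_of_lt_pi (by linarith [hθ.1]) (by linarith [hθ.2]))

def cutAnnulus {ι : Type*} (a : ι → ℝ × ℝ) : Set (ℝ × ℝ) :=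
  {x | 1 < x.1 ^ 2 + x.2 ^ 2 ∧ x.1 ^ 2 + x.2 ^ 2 < 4} \ ⋃ j, negHalfLine (a j)

def cutAngles {ι : Type*} (a : ι → ℝ × ℝ) : Set ℝ :=
  {θ | polarCoord.symm (3 / 2, θ) ∈ ⋃ j, negHalfLine (a j)}

section CutAnnulus

variable {ι : Type*} {a : ι → ℝ × ℝ} {w : ℝ × ℝ → ℝ}

theorem polarCoord_symm_mem_cutAnnulus {θ : ℝ} (hθ : θ ∉ cutAngles a) :
    polarCoord.symm (3 / 2, θ) ∈ cutAnnulus a := by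
  refine ⟨?_, hθ⟩
  have := cos_sq_add_sin_sq θ
  simp only [polarCoord_symm_apply, mem_ofPred_eq]
  constructor <;> nlinarith

theorem smul_mem_cutAnnulus {x : ℝ × ℝ} {c : ℝ} (hx : x ∈ cutAnnulus a) (hc : 0 < c)
    (h₁ : 1 < c ^ 2 * (x.1 ^ 2 + x.2 ^ 2)) (h₄ : c ^ 2 * (x.1 ^ 2 + x.2 ^ 2) < 4) :
    c • x ∈ cutAnnulus a := by
  have hq : (c • x).1 ^ 2 + (c • x).2 ^ 2 = c ^ 2 * (x.1 ^ 2 + x.2 ^ 2) := by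
    simp only [Prod.smul_fst, Prod.smul_snd, smul_eq_mul]
    ring
  refine ⟨⟨hq ▸ h₁, hq ▸ h₄⟩, ?_⟩
  simpa only [mem_iUnion, smul_mem_negHalfLine_iff hc] using hx.2

theorem apply_smul_eq_of_mem_cutAnnulus (hw : IsLocallyConstant fun x : cutAnnulus a => w x)
    {x : ℝ × ℝ} {c : ℝ} (hx : x ∈ cutAnnulus a) (hc : 0 < c) (hcx : c • x ∈ cutAnnulus a) :
    w (c • x) = w x := by
  set q := x.1 ^ 2 + x.2 ^ 2
  have hq : (c • x).1 ^ 2 + (c • x).2 ^ 2 = c ^ 2 * q := by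
    simp only [q, Prod.smul_fst, Prod.smul_snd, smul_eq_mul]
    ring
  obtain ⟨hq₁, hq₄⟩ := hx.1
  obtain ⟨hcq₁, hcq₄⟩ : 1 < c ^ 2 * q ∧ c ^ 2 * q < 4 := hq ▸ hcx.1
  have hseg : (fun s : ℝ => s • x) '' uIcc 1 c ⊆ cutAnnulus a := by
    rintro _ ⟨s, ⟨hs₁, hs₂⟩, rfl⟩
    have hs0 : 0 < s := (lt_min one_pos hc).trans_le hs₁
    suffices 1 < s ^ 2 * q ∧ s ^ 2 * q < 4 from smul_mem_cutAnnulus hx hs0 this.1 this.2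
    rcases le_total 1 c with h | h
    · rw [min_eq_left h] at hs₁
      rw [max_eq_right h] at hs₂
      have : 1 ≤ s ^ 2 := one_le_pow₀ hs₁
      have : s ^ 2 ≤ c ^ 2 := pow_le_pow_left₀ hs0.le hs₂ 2
      constructor <;> nlinarith
    · rw [min_eq_right h] at hs₁
      rw [max_eq_left h] at hs₂
      have : s ^ 2 ≤ 1 := pow_le_one₀ hs0.le hs₂
      have : c ^ 2 ≤ s ^ 2 := pow_le_pow_left₀ hc.le hs₁ 2
      constructor <;> nlinarith
  exact hw.apply_eq_of_isPreconnected_of_subset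
    (isPreconnected_uIcc.image _ (continuous_id.smul continuous_const).continuousOn) hseg
    ⟨c, right_mem_uIcc, rfl⟩ ⟨1, left_mem_uIcc, one_smul ℝ x⟩

theorem exists_eq_apply_polarCoord_symm (hw : IsLocallyConstant fun x : cutAnnulus a => w x)
    {x : ℝ × ℝ} (hx : x ∈ cutAnnulus a) :
    ∃ θ ∉ cutAngles a, w x = w (polarCoord.symm (3 / 2, θ)) := by
  have hx0 : x ≠ 0 := by
    rintro rfl
    have := hx.1.1
    norm_num at this
  obtain ⟨c, hc, θ, hcx⟩ := exists_smul_eq_polarCoord_symm hx0 (by norm_num : (0 : ℝ) < 3 / 2)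
  have hθ : θ ∉ cutAngles a := fun hθ => hx.2 <| by
    rw [cutAngles, mem_ofPred_eq, ← hcx] at hθ
    simpa only [mem_iUnion, smul_mem_negHalfLine_iff hc] using hθ
  exact ⟨θ, hθ, (hcx ▸ apply_smul_eq_of_mem_cutAnnulus hw hx hc
    (hcx ▸ polarCoord_symm_mem_cutAnnulus hθ)).symm⟩

theorem cutAngles_eq_preimage (ha : ∀ j, a j ≠ 0) :
    cutAngles a =
      (↑) ⁻¹' range fun j => (Complex.arg (-Complex.equivRealProd.symm (a j)) : Angle) := by
  ext θ
  simp only [cutAngles, mem_ofPred_eq, mem_iUnion, mem_preimage, mem_range,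
    polarCoord_symm_mem_negHalfLine_iff (ha _) (by norm_num : (0 : ℝ) < 3 / 2), eq_comm]

theorem injective_arg_neg (ha : ∀ j, a j ≠ 0)
    (hdir : ∀ i j, i ≠ j → ∀ s : ℝ, 0 < s → a i ≠ s • a j) :
    Function.Injective fun j => (Complex.arg (-Complex.equivRealProd.symm (a j)) : Angle) := by
  intro i j hij
  by_contra hne
  obtain ⟨ti, hti, hi⟩ := (polarCoord_symm_mem_negHalfLine_iff (ha i) one_pos).2 rfl
  obtain ⟨tj, htj, hj⟩ := (polarCoord_symm_mem_negHalfLine_iff (ha j) one_pos).2 hij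
  have hti0 : ti ≠ 0 := by
    rintro rfl
    exact polarCoord_symm_ne_zero one_ne_zero _ (by simpa using hi)
  have htj0 : tj ≠ 0 := by
    rintro rfl
    exact polarCoord_symm_ne_zero one_ne_zero _ (by simpa using hj)
  apply hdir i j hne (ti⁻¹ * tj)
    (mul_pos_of_neg_of_neg (inv_lt_zero.2 (hti.lt_of_ne hti0)) (htj.lt_of_ne htj0))
  rw [mul_smul, ← hj, hi, inv_smul_smul₀ hti0]

theorem finite_cutAngles_inter_Ioo [Finite ι] (ha : ∀ j, a j ≠ 0) (u v : ℝ) :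
    (cutAngles a ∩ Ioo u v).Finite := by
  have : Fact (0 < 2 * π) := ⟨two_pi_pos⟩
  rw [cutAngles_eq_preimage ha]
  exact AddCircle.finite_preimage_inter_Ioo (T := 2 * π) (finite_range _) u v

theorem ncard_cutAngles_inter_Ioo (ha : ∀ j, a j ≠ 0)
    (hdir : ∀ i j, i ≠ j → ∀ s : ℝ, 0 < s → a i ≠ s • a j) {θ : ℝ} (hθ : θ ∉ cutAngles a) :
    (cutAngles a ∩ Ioo θ (θ + 2 * π)).ncard = Nat.card ι := by
  have : Fact (0 < 2 * π) := ⟨two_pi_pos⟩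
  rw [cutAngles_eq_preimage ha] at hθ ⊢
  exact (AddCircle.ncard_preimage_inter_Ioo (T := 2 * π) hθ).trans
    (ncard_range_of_injective (injective_arg_neg ha hdir))

theorem isLocallyConstant_apply_polarCoord_symm
    (hw : IsLocallyConstant fun x : cutAnnulus a => w x) :
    IsLocallyConstant fun θ : ((cutAngles a)ᶜ : Set ℝ) => w (polarCoord.symm (3 / 2, θ)) := by
  have hP : Continuous fun θ : ((cutAngles a)ᶜ : Set ℝ) =>
      (⟨polarCoord.symm (3 / 2, θ), polarCoord_symm_mem_cutAnnulus θ.2⟩ : cutAnnulus a) := by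
    fun_prop
  exact hw.comp_continuous hP

theorem exists_tendsto_of_trace (hfin : ∀ u v, (cutAngles a ∩ Ioo u v).Finite)
    (hjump : ∀ j, ∀ t : ℝ, t < 0 →
      1 < (t • a j).1 ^ 2 + (t • a j).2 ^ 2 →
      (t • a j).1 ^ 2 + (t • a j).2 ^ 2 < 4 →
      ∃ cp cm : ℝ,
        Tendsto w (𝓝[cutAnnulus a ∩ {x : ℝ × ℝ | 0 < (a j).1 * x.2 - (a j).2 * x.1}] (t • a j))
          (𝓝 cp) ∧
        Tendsto w (𝓝[cutAnnulus a ∩ {x : ℝ × ℝ | (a j).1 * x.2 - (a j).2 * x.1 < 0}] (t • a j))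
          (𝓝 cm) ∧
        cp + cm = 0)
    {α : ℝ} (hα : α ∈ cutAngles a) :
    ∃ cl cr, Tendsto (fun θ => w (polarCoord.symm (3 / 2, θ))) (𝓝[<] α) (𝓝 cl) ∧
      Tendsto (fun θ => w (polarCoord.symm (3 / 2, θ))) (𝓝[>] α) (𝓝 cr) ∧ cl + cr = 0 := by
  obtain ⟨j, t, ht, hP⟩ := mem_iUnion.1 hα
  have ht0 : t ≠ 0 := by
    rintro rfl
    exact polarCoord_symm_ne_zero (r := 3 / 2) (by norm_num) α (by simpa using hP)
  have hq : (t • a j).1 ^ 2 + (t • a j).2 ^ 2 = 9 / 4 := by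
    rw [← hP]
    simp only [polarCoord_symm_apply]
    linear_combination (9 / 4 : ℝ) * cos_sq_add_sin_sq α
  obtain ⟨cp, cm, hcp, hcm, hsum⟩ :=
    hjump j t (ht.lt_of_ne ht0) (by rw [hq]; norm_num) (by rw [hq]; norm_num)
  have hcont : Tendsto (fun θ => polarCoord.symm (3 / 2, θ)) (𝓝 α) (𝓝 (t • a j)) :=
    hP ▸ (continuous_polarCoord_symm.comp (Continuous.prodMk_right _)).tendsto α
  have hmem : ∀ᶠ θ in 𝓝[≠] α, polarCoord.symm (3 / 2, θ) ∈ cutAnnulus a :=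
    (eventually_nhdsNE_notMem_of_finite hfin α).mono fun _ => polarCoord_symm_mem_cutAnnulus
  refine ⟨cp, cm, hcp.comp ?_, hcm.comp ?_, hsum⟩
  · exact tendsto_nhdsWithin_iff.2 ⟨hcont.mono_left nhdsWithin_le_nhds,
      (hmem.filter_mono (nhdsLT_le_nhdsNE α)).and
        (eventually_nhdsLT_cross_pos (by norm_num) (ht.lt_of_ne ht0) hP)⟩
  · exact tendsto_nhdsWithin_iff.2 ⟨hcont.mono_left nhdsWithin_le_nhds,
      (hmem.filter_mono (nhdsGT_le_nhdsNE α)).and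
        (eventually_nhdsGT_cross_neg (by norm_num) (ht.lt_of_ne ht0) hP)⟩

end CutAnnulus

theorem cut_annulus_locally_constant_vanishes_general (k₁ : ℕ) (hodd : Odd k₁)
    (a : Fin k₁ → ℝ × ℝ) (ha : ∀ j, a j ≠ 0)
    (hdir : ∀ i j, i ≠ j → ∀ s : ℝ, 0 < s → a i ≠ s • a j)
    (Γ : Fin k₁ → Set (ℝ × ℝ))
    (hΓ : ∀ j, Γ j = {x : ℝ × ℝ | ∃ t : ℝ, t ≤ 0 ∧ x = t • a j})
    (D : Set (ℝ × ℝ))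
    (hD : D = {x : ℝ × ℝ | 1 < x.1 ^ 2 + x.2 ^ 2 ∧ x.1 ^ 2 + x.2 ^ 2 < 4} \ ⋃ j, Γ j)
    (w : ℝ × ℝ → ℝ)
    (hw : IsLocallyConstant (fun x : D => w x))
    (hjump : ∀ j : Fin k₁, ∀ t : ℝ, t < 0 →
      1 < (t • a j).1 ^ 2 + (t • a j).2 ^ 2 →
      (t • a j).1 ^ 2 + (t • a j).2 ^ 2 < 4 →
      ∃ cp cm : ℝ,
        Tendsto w (𝓝[D ∩ {x : ℝ × ℝ | 0 < (a j).1 * x.2 - (a j).2 * x.1}] (t • a j))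
          (𝓝 cp) ∧
        Tendsto w (𝓝[D ∩ {x : ℝ × ℝ | (a j).1 * x.2 - (a j).2 * x.1 < 0}] (t • a j))
          (𝓝 cm) ∧
        cp + cm = 0) :
    ∀ x ∈ D, w x = 0 := by
  obtain rfl : Γ = fun j => negHalfLine (a j) := funext hΓ
  obtain rfl : D = cutAnnulus a := hD
  have hfin := finite_cutAngles_inter_Ioo ha
  have hcircle : ∀ θ ∉ cutAngles a, w (polarCoord.symm (3 / 2, θ)) = 0 := by
    intro θ hθ
    have hθ' : θ + 2 * π ∉ cutAngles a := by
      rwa [cutAngles, mem_ofPred_eq, polarCoord_symm_add_two_pi]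
    have h := apply_eq_neg_one_pow_ncard_mul hfin (isLocallyConstant_apply_polarCoord_symm hw)
      (fun α => exists_tendsto_of_trace hfin hjump) (by linarith [pi_pos]) hθ hθ'
    rw [ncard_cutAngles_inter_Ioo ha hdir hθ, Nat.card_fin, hodd.neg_one_pow,
      polarCoord_symm_add_two_pi] at h
    linarith
  intro x hx
  obtain ⟨θ, hθ, hxθ⟩ := exists_eq_apply_polarCoord_symm hw hx
  exact hxθ.trans (hcircle θ hθ)

/-- Let `k₁` be odd and consider the open annulus `{1 < |x| < 2}` cut along `k₁`
half-lines `Γ₀^j = {t • a^j : t ≤ 0}` through the origin with pairwise distinct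
directions. If `w` is locally constant on the cut annulus `D` and, across each
half-line, the two one-sided traces of `w` (limits from the sides `±ν^j`, where
`ν^j = (-(a^j)₂, (a^j)₁)`) sum to zero, then `w ≡ 0` on `D`. -/
theorem cut_annulus_locally_constant_vanishes (k₁ : ℕ) (hodd : Odd k₁) (hk : 1 ≤ k₁)
    (a : Fin k₁ → ℝ × ℝ) (ha : ∀ j, a j ≠ 0)
    (hdir : ∀ i j, i ≠ j → ∀ s : ℝ, 0 < s → a i ≠ s • a j)
    (Γ : Fin k₁ → Set (ℝ × ℝ))
    (hΓ : ∀ j, Γ j = {x : ℝ × ℝ | ∃ t : ℝ, t ≤ 0 ∧ x = t • a j})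
    (D : Set (ℝ × ℝ))
    (hD : D = {x : ℝ × ℝ | 1 < x.1 ^ 2 + x.2 ^ 2 ∧ x.1 ^ 2 + x.2 ^ 2 < 4} \ ⋃ j, Γ j)
    (w : ℝ × ℝ → ℝ)
    (hw : IsLocallyConstant (fun x : D => w x))
    (hjump : ∀ j : Fin k₁, ∀ t : ℝ, t < 0 →
      1 < (t • a j).1 ^ 2 + (t • a j).2 ^ 2 →
      (t • a j).1 ^ 2 + (t • a j).2 ^ 2 < 4 →
      ∃ cp cm : ℝ,
        Tendsto w (𝓝[D ∩ {x : ℝ × ℝ | 0 < (a j).1 * x.2 - (a j).2 * x.1}] (t • a j))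
          (𝓝 cp) ∧
        Tendsto w (𝓝[D ∩ {x : ℝ × ℝ | (a j).1 * x.2 - (a j).2 * x.1 < 0}] (t • a j))
          (𝓝 cm) ∧
        cp + cm = 0) :
    ∀ x ∈ D, w x = 0 :=
  cut_annulus_locally_constant_vanishes_general k₁ hodd a ha hdir Γ hΓ D hD w hw hjump
end

section
/- Let X be a real Hilbert space, H ⊂ X a closed subspace, L : X → ℝ a continuous linear functional, g ∈ X, and J(w) = (1/2)‖w‖² + L(w). Let V minimize J over g + H and set E = J(V). Then E = -(1/2) sup_{w ∈ H \ {0}} (⟨w, g⟩ + L(w))² / ‖w‖² + (1/2)‖g‖² + L(g). -/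
/-!
Perturbing the minimizer `V` along `t • w` with `w ∈ H` gives the Euler–Lagrange equation
`⟪V, w⟫ + L w = 0`, so the numerator `⟪w, g⟫ + L w` equals `-⟪w, V - g⟫`. By Cauchy–Schwarz the
supremum of `⟪w, V - g⟫² / ‖w‖²` over `H ∖ {0}` is `‖V - g‖²`, attained at `w = V - g`, and the
Euler–Lagrange equation with `w = V - g` turns `J V` into `-(1/2)‖V - g‖² + (1/2)‖g‖² + L g`.
-/

open RealInnerProductSpace

theorem eq_zero_of_forall_linear_add_quadratic_nonneg {a c : ℝ}
    (h : ∀ t : ℝ, 0 ≤ a * t + c * t ^ 2) : a = 0 := by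
  have hmin : IsLocalMin (fun t : ℝ => a * t + c * t ^ 2) 0 :=
    Filter.Eventually.of_forall fun t => by simpa using h t
  have hderiv : HasDerivAt (fun t : ℝ => a * t + c * t ^ 2) a 0 := by
    simpa using
      ((hasDerivAt_id' (0 : ℝ)).const_mul a).fun_add ((hasDerivAt_pow 2 (0 : ℝ)).const_mul c)
  exact hmin.hasDerivAt_eq_zero hderiv

section InnerProductSpace

variable {X : Type*} [NormedAddCommGroup X] [InnerProductSpace ℝ X]

theorem norm_add_smul_sq_real (v w : X) (t : ℝ) :
    ‖v + t • w‖ ^ 2 = ‖v‖ ^ 2 + 2 * t * ⟪v, w⟫ + t ^ 2 * ‖w‖ ^ 2 := by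
  rw [norm_add_sq_real, real_inner_smul_right, norm_smul, mul_pow, Real.norm_eq_abs, sq_abs]
  ring

theorem inner_add_eq_zero_of_forall_le_add {H : Submodule ℝ X} {L : X →L[ℝ] ℝ} {V : X}
    (hmin : ∀ w ∈ H, (1 / 2) * ‖V‖ ^ 2 + L V ≤ (1 / 2) * ‖V + w‖ ^ 2 + L (V + w))
    {w : X} (hw : w ∈ H) : ⟪V, w⟫ + L w = 0 := by
  refine eq_zero_of_forall_linear_add_quadratic_nonneg (c := ‖w‖ ^ 2 / 2) fun t => ?_
  have h := hmin (t • w) (H.smul_mem t hw)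
  rw [norm_add_smul_sq_real, map_add, map_smul, smul_eq_mul] at h
  nlinarith

theorem sSup_inner_sq_div_norm_sq_eq {H : Submodule ℝ X} {h : X} (hh : h ∈ H) :
    sSup {y : ℝ | ∃ w ∈ H, w ≠ 0 ∧ y = ⟪w, h⟫ ^ 2 / ‖w‖ ^ 2} = ‖h‖ ^ 2 := by
  set S := {y : ℝ | ∃ w ∈ H, w ≠ 0 ∧ y = ⟪w, h⟫ ^ 2 / ‖w‖ ^ 2}
  have hle : ∀ y ∈ S, y ≤ ‖h‖ ^ 2 := by
    rintro y ⟨w, -, hw0, rfl⟩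
    have hw : 0 < ‖w‖ ^ 2 := by positivity
    rw [div_le_iff₀ hw, ← mul_pow, ← sq_abs]
    gcongr
    rw [mul_comm]
    exact abs_real_inner_le_norm w h
  by_cases h0 : h = 0
  · -- the set is `{0}`, or empty when `H = ⊥`, and `sSup ∅ = 0` in `ℝ`
    subst h0
    rw [norm_zero, sq, zero_mul]
    refine le_antisymm (Real.sSup_nonpos fun y hy => by simpa using hle y hy) ?_
    exact Real.sSup_nonneg fun y ⟨w, _, _, hy⟩ => hy ▸ by positivity
  · have hmem : ‖h‖ ^ 2 ∈ S := by
      refine ⟨h, hh, h0, ?_⟩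
      rw [real_inner_self_eq_norm_sq]
      field_simp [norm_ne_zero_iff.mpr h0]
    exact IsGreatest.csSup_eq ⟨hmem, hle⟩

end InnerProductSpace

theorem energy_sup_characterization_general
    {X : Type*} [NormedAddCommGroup X] [InnerProductSpace ℝ X]
    (H : Submodule ℝ X)
    (L : X →L[ℝ] ℝ) (g : X) (J : X → ℝ)
    (hJ : ∀ w, J w = (1 / 2) * ‖w‖ ^ 2 + L w)
    (V : X) (hVmem : V - g ∈ H) (hVmin : ∀ u : X, u - g ∈ H → J V ≤ J u)
    (E : ℝ) (hE : E = J V) :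
    E = -(1 / 2) * sSup {y : ℝ | ∃ w ∈ H, w ≠ 0 ∧ y = (⟪w, g⟫ + L w) ^ 2 / ‖w‖ ^ 2}
        + (1 / 2) * ‖g‖ ^ 2 + L g := by
  have euler_lagrange : ∀ w ∈ H, ⟪V, w⟫ + L w = 0 :=
    fun w => inner_add_eq_zero_of_forall_le_add fun w hw => by
      simpa only [hJ] using hVmin (V + w) (by simpa [add_sub_right_comm] using H.add_mem hVmem hw)
  have hset : {y : ℝ | ∃ w ∈ H, w ≠ 0 ∧ y = (⟪w, g⟫ + L w) ^ 2 / ‖w‖ ^ 2}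
      = {y : ℝ | ∃ w ∈ H, w ≠ 0 ∧ y = ⟪w, V - g⟫ ^ 2 / ‖w‖ ^ 2} := by
    ext y
    refine exists_congr fun w => and_congr_right fun hw => and_congr_right fun _ => ?_
    have hnum : ⟪w, g⟫ + L w = -⟪w, V - g⟫ := by
      rw [inner_sub_right, real_inner_comm V]
      linarith [euler_lagrange w hw]
    rw [hnum, neg_sq]
  rw [hset, sSup_inner_sq_div_norm_sq_eq hVmem, hE, hJ, norm_sub_sq_real]
  have hEL := euler_lagrange _ hVmem
  rw [inner_sub_right, real_inner_self_eq_norm_sq, map_sub] at hEL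
  linarith

/-- Abstract characterization of the minimal energy: if `V` minimizes
`J(w) = (1/2)‖w‖² + L(w)` over the affine subspace `g + H` and `E = J(V)`, then
`E = -(1/2) sup_{w ∈ H∖{0}} (⟨w,g⟩ + L(w))²/‖w‖² + (1/2)‖g‖² + L(g)`. -/
theorem energy_sup_characterization
    {X : Type*} [NormedAddCommGroup X] [InnerProductSpace ℝ X] [CompleteSpace X]
    (H : Submodule ℝ X) (hH : IsClosed (H : Set X))
    (L : X →L[ℝ] ℝ) (g : X) (J : X → ℝ)
    (hJ : ∀ w, J w = (1 / 2) * ‖w‖ ^ 2 + L w)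
    (V : X) (hVmem : V - g ∈ H) (hVmin : ∀ u : X, u - g ∈ H → J V ≤ J u)
    (E : ℝ) (hE : E = J V) :
    E = -(1 / 2) * sSup {y : ℝ | ∃ w ∈ H, w ≠ 0 ∧ y = (⟪w, g⟫ + L w) ^ 2 / ‖w‖ ^ 2}
        + (1 / 2) * ‖g‖ ^ 2 + L g :=
  energy_sup_characterization_general H L g J hJ V hVmem hVmin E hE
end
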